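/- Let G be a graph on vertices g_1,…,g_n with m edges, let G' be an isomorphic copy of G on vertices g'_1,…,g'_n, and let H be the graph on vertex set {(g_i, g'_j) : 1 ≤ i, j ≤ n} whose edges are, for each edge {g_i,g_j} of G, the two edges {(g_i,g'_i),(g_j,g'_j)} and {(g_i,g'_j),(g_j,g'_i)}. Then H is a spanning, cross-like subgraph of K_n ⊗ K_n, and the connected components of H are one copy of G, m copies of K₂, and n² − n − 2m copies of K₁; that is, H ≅ G ∪ mK₂ ∪ (n² − n − 2m)K₁. -/

import Mathlib

/-!
The vertex set `V × V` of `crossGraph G` splits into the diagonal `{(a, a)}`, the darts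
`(a, b)` of `G` and the darts of the complement `Gᶜ`. On the diagonal the graph is a copy
of `G`; a dart `(a, b)` of `G` is adjacent only to its reversal `(b, a)`, giving `m` copies
of `K₂`; the darts of `Gᶜ` are isolated, and counting shows there are `n² − n − 2m` of them.
-/

open SimpleGraph

variable {α β : Type*}

/-- The tensor (categorical / direct) product of two simple graphs:
`(g,h)` and `(g',h')` are adjacent iff `g ~ g'` in `G` and `h ~ h'` in `H`. -/
def tensorProd (G : SimpleGraph α) (H : SimpleGraph β) : SimpleGraph (α × β) where
  Adj x y := G.Adj x.1 y.1 ∧ H.Adj x.2 y.2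
  symm := ⟨fun _ _ h => ⟨h.1.symm, h.2.symm⟩⟩
  loopless := ⟨fun x h => G.loopless.irrefl x.1 h.1⟩

infixl:70 " ⊗t " => tensorProd

@[simp] lemma tensorProd_adj (G : SimpleGraph α) (H : SimpleGraph β) (x y : α × β) :
    (G ⊗t H).Adj x y ↔ G.Adj x.1 y.1 ∧ H.Adj x.2 y.2 := Iff.rfl

/-- The 2-sum (sum modulo 2) of two graphs on a common vertex set: the edge set is
the symmetric difference of the two edge sets. -/
def twoSum (G H : SimpleGraph α) : SimpleGraph α where
  Adj u v := (G.Adj u v ∧ ¬ H.Adj u v) ∨ (H.Adj u v ∧ ¬ G.Adj u v)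
  symm := ⟨fun u v h => h.imp (fun h' => ⟨h'.1.symm, fun hh => h'.2 hh.symm⟩)
    (fun h' => ⟨h'.1.symm, fun hh => h'.2 hh.symm⟩)⟩
  loopless := ⟨fun u h => h.elim (fun h' => G.loopless.irrefl u h'.1) (fun h' => H.loopless.irrefl u h'.1)⟩

@[simp] lemma twoSum_adj (G H : SimpleGraph α) (u v : α) :
    (twoSum G H).Adj u v ↔ (G.Adj u v ∧ ¬ H.Adj u v) ∨ (H.Adj u v ∧ ¬ G.Adj u v) := Iff.rfl

/-- The iterated 2-sum `⊕_{k=1}^l F k` (`⊥`, the empty graph, is the neutral element). -/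
def twoSumMany {l : ℕ} (F : Fin l → SimpleGraph α) : SimpleGraph α :=
  (List.ofFn F).foldr twoSum ⊥

/-- `K ∈ 𝒦(p,q)`: `K` is a 2-sum `⊕_{k=1}^l (G_k ⊗ H_k)` of tensor products, where every
`G_k` is a graph on `p` fixed vertices with at least one edge and every `H_k` is a graph on
`q` fixed vertices with at least one edge. -/
def MemK (p q : ℕ) (K : SimpleGraph (Fin p × Fin q)) : Prop :=
  ∃ (l : ℕ) (G : Fin l → SimpleGraph (Fin p)) (H : Fin l → SimpleGraph (Fin q)),
    0 < l ∧ (∀ k, ∃ a b, (G k).Adj a b) ∧ (∀ k, ∃ c d, (H k).Adj c d) ∧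
    K = twoSumMany fun k => (G k) ⊗t (H k)

/-- A graph on `α × β` is cross-like if `(a,b) ~ (c,d)` implies `(a,d) ~ (c,b)`. -/
def CrossLike (K : SimpleGraph (α × β)) : Prop :=
  ∀ a c : α, ∀ b d : β, K.Adj (a, b) (c, d) → K.Adj (a, d) (c, b)

/-- The graph with the single edge `{a,b}` (for `a ≠ b`). -/
def singleEdge (a b : α) : SimpleGraph α := fromEdgeSet {s(a, b)}

/-- The tensor-elementary graph `E(i,i';j,j')`: the tensor product of the single-edge
graph with edge `{g_i, g_{i'}}` and the single-edge graph with edge `{h_j, h_{j'}}`. -/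
def tensorElem {p q : ℕ} (i i' : Fin p) (j j' : Fin q) : SimpleGraph (Fin p × Fin q) :=
  singleEdge i i' ⊗t singleEdge j j'

/-- `m` disjoint copies of `K₂` (a single edge), on vertex set `Fin m × Bool`. -/
def copiesK2 (m : ℕ) : SimpleGraph (Fin m × Bool) where
  Adj x y := x.1 = y.1 ∧ x.2 ≠ y.2
  symm := ⟨fun x y h => ⟨h.1.symm, h.2.symm⟩⟩
  loopless := ⟨fun x h => h.2 rfl⟩

/-- The graph `H` on `{(g_i, g'_j) : 1 ≤ i, j ≤ n}` whose edges are, for each edge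
`{g_i, g_j}` of `G`, the two edges `{(g_i,g'_i),(g_j,g'_j)}` and `{(g_i,g'_j),(g_j,g'_i)}`
(the second coordinate plays the role of the primed isomorphic copy `G'` of `G`). -/
def crossGraph (G : SimpleGraph α) : SimpleGraph (α × α) where
  Adj x y := G.Adj x.1 y.1 ∧ ((x.2 = x.1 ∧ y.2 = y.1) ∨ (x.2 = y.1 ∧ y.2 = x.1))
  symm := ⟨fun x y h => ⟨h.1.symm, h.2.imp (fun e => ⟨e.2, e.1⟩) (fun e => ⟨e.2, e.1⟩)⟩⟩
  loopless := ⟨fun x h => G.loopless.irrefl x.1 h.1⟩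


namespace SimpleGraph

variable {V W : Type*}

def botIsoOfEquiv (e : V ≃ W) : (⊥ : SimpleGraph V) ≃g (⊥ : SimpleGraph W) :=
  ⟨e, by simp⟩

variable (G : SimpleGraph V)

instance [Finite V] : Finite G.Dart :=
  .of_injective _ Dart.toProd_injective

lemma Dart.toProd_eq_swap_iff {G : SimpleGraph V} (d d' : G.Dart) :
    d'.toProd = d.swap ↔ d' = d.symm :=
  (Dart.ext_iff d' d.symm).symm

lemma natCard_dart [Finite V] : Nat.card G.Dart = 2 * Nat.card G.edgeSet := by
  classical
  have := Fintype.ofFinite V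
  rw [Nat.card_eq_fintype_card, dart_card_eq_twice_card_edges, edgeFinset_card,
    Nat.card_eq_fintype_card]

def dartFlip : SimpleGraph G.Dart where
  Adj d d' := d' = d.symm
  symm := ⟨fun d d' h => by simp [h, Dart.symm_symm]⟩
  loopless := ⟨fun d h => d.symm_ne h.symm⟩

@[simp] lemma dartFlip_adj (d d' : G.Dart) : G.dartFlip.Adj d d' ↔ d' = d.symm := Iff.rfl

section Orientation

variable [LinearOrder V]

/-- Orienting each edge from its smaller to its larger end identifies darts with
edges tagged by a direction. -/
def dartOrient (d : G.Dart) : G.edgeSet × Bool :=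
  (⟨d.edge, d.edge_mem⟩, decide (d.fst < d.snd))

lemma dartOrient_eq_and_ne_iff (d d' : G.Dart) :
    ((G.dartOrient d).1 = (G.dartOrient d').1 ∧ (G.dartOrient d).2 ≠ (G.dartOrient d').2) ↔
      d' = d.symm := by
  simp only [dartOrient, Subtype.mk.injEq, dart_edge_eq_iff, Dart.symm, ne_eq, decide_eq_decide]
  constructor
  · rintro ⟨rfl | rfl, hne⟩
    · exact absurd Iff.rfl hne
    · exact (Dart.symm_symm _).symm
  · rintro rfl
    refine ⟨Or.inr (Dart.symm_symm _).symm, fun h => ?_⟩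
    rcases lt_or_gt_of_ne d.fst_ne_snd with hlt | hlt
    · exact lt_asymm hlt (h.1 hlt)
    · exact lt_asymm hlt (h.2 hlt)

lemma dartOrient_injective : Function.Injective G.dartOrient := by
  intro d d' h
  obtain rfl | rfl := (G.dart_edge_eq_iff d d').1 (congrArg Subtype.val (congrArg Prod.fst h))
  · rfl
  · exact absurd (congrArg Prod.snd h) ((G.dartOrient_eq_and_ne_iff d' d'.symm).2 rfl).2.symm

lemma dartOrient_bijective [Finite V] : Function.Bijective G.dartOrient := by
  refine (Nat.bijective_iff_injective_and_card _).2 ⟨G.dartOrient_injective, ?_⟩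
  rw [natCard_dart, Nat.card_prod, Nat.card_eq_fintype_card (α := Bool), Fintype.card_bool,
    mul_comm]

noncomputable def dartFlipIsoCopiesK2 [Finite V] [Fintype G.edgeSet] :
    G.dartFlip ≃g copiesK2 G.edgeFinset.card where
  toEquiv := (Equiv.ofBijective _ G.dartOrient_bijective).trans
    ((Fintype.equivFinOfCardEq G.edgeFinset_card.symm).prodCongr (Equiv.refl Bool))
  map_rel_iff' {d d'} := by
    simpa [copiesK2, Equiv.apply_eq_iff_eq] using G.dartOrient_eq_and_ne_iff d d'

end Orientation

end SimpleGraph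

section crossGraph

variable {V : Type*} (G : SimpleGraph V)

lemma crossGraph_adj_iff (x y : V × V) :
    (crossGraph G).Adj x y ↔
      (x.1 = x.2 ∧ y.1 = y.2 ∧ G.Adj x.1 y.1) ∨ (G.Adj x.1 x.2 ∧ y = x.swap) := by
  obtain ⟨a, b⟩ := x
  obtain ⟨c, d⟩ := y
  simp only [crossGraph, Prod.swap_prod_mk, Prod.mk.injEq]
  constructor
  · rintro ⟨h, ⟨rfl, rfl⟩ | ⟨rfl, rfl⟩⟩
    · exact Or.inl ⟨rfl, rfl, h⟩
    · exact Or.inr ⟨h, rfl, rfl⟩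
  · rintro (⟨rfl, rfl, h⟩ | ⟨h, rfl, rfl⟩)
    · exact ⟨h, Or.inl ⟨rfl, rfl⟩⟩
    · exact ⟨h, Or.inr ⟨rfl, rfl⟩⟩

lemma crossGraph_le_top_tensorProd_top : crossGraph G ≤ (⊤ : SimpleGraph V) ⊗t ⊤ := by
  rintro x y h
  rw [crossGraph_adj_iff] at h
  rcases h with ⟨hx, hy, h⟩ | ⟨h, rfl⟩
  · exact ⟨h.ne, by rw [← hx, ← hy]; exact h.ne⟩
  · exact ⟨h.ne, h.ne'⟩

lemma crossLike_crossGraph : CrossLike (crossGraph G) :=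
  fun _ _ _ _ ⟨h, hxy⟩ => ⟨h, hxy.symm.imp And.symm And.symm⟩

lemma crossGraph_adj_diag_iff (a : V) (y : V × V) :
    (crossGraph G).Adj (a, a) y ↔ y.1 = y.2 ∧ G.Adj a y.1 := by
  simp [crossGraph_adj_iff]

lemma crossGraph_adj_dart_iff (d : G.Dart) (y : V × V) :
    (crossGraph G).Adj d.toProd y ↔ y = d.swap := by
  simp [crossGraph_adj_iff, d.fst_ne_snd, d.adj]

lemma crossGraph_not_adj_compl_dart (d : Gᶜ.Dart) (y : V × V) :
    ¬(crossGraph G).Adj d.toProd y := by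
  have hd := (G.compl_adj _ _).1 d.adj
  rw [crossGraph_adj_iff]
  tauto

def crossGraphVertex : (V ⊕ G.Dart) ⊕ Gᶜ.Dart → V × V :=
  Sum.elim (Sum.elim (fun a => (a, a)) Dart.toProd) Dart.toProd

lemma crossGraphVertex_bijective : Function.Bijective (crossGraphVertex G) := by
  refine ⟨?_, fun x => ?_⟩
  · refine (Function.Injective.sumElim (fun _ _ h => congrArg Prod.fst h)
      Dart.toProd_injective ?_).sumElim Dart.toProd_injective ?_
    · intro a d h
      exact d.fst_ne_snd (by rw [← h])
    · rintro (a | d) d' h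
      · exact d'.fst_ne_snd (by rw [← h]; rfl)
      · exact ((G.compl_adj _ _).1 d'.adj).2 (h ▸ d.adj)
  · by_cases hd : x.1 = x.2
    · exact ⟨.inl (.inl x.1), Prod.ext rfl hd⟩
    by_cases ha : G.Adj x.1 x.2
    · exact ⟨.inl (.inr ⟨x, ha⟩), rfl⟩
    · exact ⟨.inr ⟨x, (G.compl_adj _ _).2 ⟨hd, ha⟩⟩, rfl⟩

lemma natCard_compl_dart [Finite V] :
    Nat.card Gᶜ.Dart = Nat.card V ^ 2 - Nat.card V - 2 * Nat.card G.edgeSet := by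
  have h := Nat.card_eq_of_bijective _ (crossGraphVertex_bijective G)
  rw [Nat.card_sum, Nat.card_sum, natCard_dart, Nat.card_prod] at h
  rw [sq, ← h]
  omega

noncomputable def crossGraphIso :
    (G ⊕g G.dartFlip) ⊕g (⊥ : SimpleGraph Gᶜ.Dart) ≃g crossGraph G where
  toEquiv := Equiv.ofBijective _ (crossGraphVertex_bijective G)
  map_rel_iff' {u v} := by
    change (crossGraph G).Adj (crossGraphVertex G u) (crossGraphVertex G v) ↔ _
    rcases u with (a | d) | d
    · rcases v with (b | d') | d'
      · simp [crossGraphVertex, crossGraph_adj_diag_iff]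
      · simp [crossGraphVertex, crossGraph_adj_diag_iff, d'.fst_ne_snd]
      · simp [crossGraphVertex, crossGraph_adj_diag_iff]
    · rcases v with (b | d') | d'
      · refine iff_of_false (fun h => d.fst_ne_snd ?_) (by simp)
        simp only [crossGraphVertex, Sum.elim_inl, Sum.elim_inr, crossGraph_adj_dart_iff] at h
        exact (congrArg Prod.snd h).symm.trans (congrArg Prod.fst h)
      · simp [crossGraphVertex, crossGraph_adj_dart_iff, Dart.toProd_eq_swap_iff]
      · refine iff_of_false (fun h => ((G.compl_adj _ _).1 d'.adj).2 ?_) (by simp)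
        simp only [crossGraphVertex, Sum.elim_inl, Sum.elim_inr, crossGraph_adj_dart_iff] at h
        rw [h]
        exact d.symm.adj
    · exact iff_of_false (crossGraph_not_adj_compl_dart G d _)
        (by rcases v with _ | _ <;> simp)

end crossGraph

/-- Let `G` be a graph on `n` vertices with `m` edges and let `H` be the graph on
`Fin n × Fin n` with edges `{(g_i,g'_i),(g_j,g'_j)}` and `{(g_i,g'_j),(g_j,g'_i)}` for each
edge `{g_i,g_j}` of `G`. Then `H` is a spanning, cross-like subgraph of `K_n ⊗ K_n`, and
`H ≅ G ∪ mK₂ ∪ (n² − n − 2m)K₁`. -/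
theorem crossGraph_spec (n : ℕ) (G : SimpleGraph (Fin n)) [Fintype G.edgeSet] :
    crossGraph G ≤ (⊤ : SimpleGraph (Fin n)) ⊗t (⊤ : SimpleGraph (Fin n)) ∧
    CrossLike (crossGraph G) ∧
    Nonempty
      (crossGraph G ≃g
        ((G ⊕g copiesK2 G.edgeFinset.card) ⊕g
          (⊥ : SimpleGraph (Fin (n ^ 2 - n - 2 * G.edgeFinset.card))))) := by
  refine ⟨crossGraph_le_top_tensorProd_top G, crossLike_crossGraph G, ⟨?_⟩⟩
  have hcard : Nat.card Gᶜ.Dart = n ^ 2 - n - 2 * G.edgeFinset.card := by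
    rw [natCard_compl_dart, Nat.card_fin, edgeFinset_card, Nat.card_eq_fintype_card]
  exact (crossGraphIso G).symm.trans ((Iso.refl.sumCongr G.dartFlipIsoCopiesK2).sumCongr
    (botIsoOfEquiv (Finite.equivFinOfCardEq hcard)))
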